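/- Let r ≥ r* ≥ 1 and d₁, d₂ ≥ r + r*. Let M̃, M* ∈ ℝ^{d₁×d₂} satisfy rank(M̃) = r, rank(M*) = r*, M̃ M*ᵀ = 0 and M̃ᵀ M* = 0 (orthogonal column and row spaces), and suppose all nonzero singular values of M̃ and of M* equal 1. Then for every λ ≥ 0, the unique minimizer over ℝ^{d₁×d₂} of M ↦ (1/2)‖M − M̃‖_F² + λ‖M‖_* is M̂ = (1−λ)₊ M̃; moreover, for every λ ∈ [0,1], ‖M̂ − M*‖_F = √(r* + (1−λ)²·r) ≥ (1/√2)·(√(r*)·λ + √(r+r*)·(1−λ)). -/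

import Mathlib

noncomputable section

open Matrix

attribute [local instance] Matrix.normedAddCommGroup Matrix.normedSpace

/-- Euclidean norm on `ℝⁿ`. -/
def enorm {n : ℕ} (x : Fin n → ℝ) : ℝ := Real.sqrt (∑ i, x i ^ 2)

/-- Frobenius norm of a real matrix. -/
def frob {m n : ℕ} (A : Matrix (Fin m) (Fin n) ℝ) : ℝ := Real.sqrt (∑ i, ∑ j, A i j ^ 2)

/-- Trace inner product `⟨A,B⟩ = tr(AᵀB)`. -/
def tip {m n : ℕ} (A B : Matrix (Fin m) (Fin n) ℝ) : ℝ := ∑ i, ∑ j, A i j * B i j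

/-- Spectral (operator) norm: largest singular value. -/
def opNorm {m n : ℕ} (A : Matrix (Fin m) (Fin n) ℝ) : ℝ :=
  sSup {t | ∃ x : Fin n → ℝ, _root_.enorm x ≤ 1 ∧ t = _root_.enorm (A.mulVec x)}

/-- Nuclear norm: `tr √(AᴴA)`, the sum of the singular values. -/
def nucNorm {m n : ℕ} (A : Matrix (Fin m) (Fin n) ℝ) : ℝ :=
  ((Matrix.posSemidef_conjTranspose_mul_self A).1.eigenvectorUnitary.1 *
    diagonal ((RCLike.ofReal : ℝ → ℝ) ∘
      (Real.sqrt ∘ (Matrix.posSemidef_conjTranspose_mul_self A).1.eigenvalues)) *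
    (star (Matrix.posSemidef_conjTranspose_mul_self A).1.eigenvectorUnitary :
      Matrix (Fin n) (Fin n) ℝ)).trace

/-- The `j`-th largest singular value of a real matrix (`1`-indexed):
the list of square roots of eigenvalues of `AᴴA`, sorted in decreasing order. -/
def singVal {m n : ℕ} (A : Matrix (Fin m) (Fin n) ℝ) (j : ℕ) : ℝ :=
  (((List.ofFn ((by rw [IsHermitian, conjTranspose_eq_transpose_of_trivial, transpose_mul, transpose_transpose] : (Aᵀ * A).IsHermitian).eigenvalues)).map
      Real.sqrt).insertionSort (· ≥ ·)).getD (j - 1) 0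

/-- A second-order critical point of `f`: zero gradient and positive-semidefinite
Hessian quadratic form. -/
def IsSecondOrderCriticalPoint {E : Type*} [NormedAddCommGroup E] [NormedSpace ℝ E]
    (f : E → ℝ) (x : E) : Prop :=
  fderiv ℝ f x = 0 ∧ ∀ v : E, 0 ≤ fderiv ℝ (fun y => fderiv ℝ f y v) x v

/-- The gradient of `φ` at `M`, w.r.t. the trace inner product. -/
def gradM {m n : ℕ} (φ : Matrix (Fin m) (Fin n) ℝ → ℝ) (M : Matrix (Fin m) (Fin n) ℝ) :
    Matrix (Fin m) (Fin n) ℝ :=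
  Matrix.of fun i j => fderiv ℝ φ M (Matrix.single i j 1)

/-- Hessian quadratic form `∇²φ(M)[E,E]`. -/
def hess {m n : ℕ} (φ : Matrix (Fin m) (Fin n) ℝ → ℝ) (M E : Matrix (Fin m) (Fin n) ℝ) : ℝ :=
  fderiv ℝ (fun N => fderiv ℝ φ N E) M E

/-- Adjoint of a linear measurement map, w.r.t. the trace inner product. -/
def adj {m n p : ℕ} (A : Matrix (Fin m) (Fin n) ℝ →ₗ[ℝ] (Fin p → ℝ)) (ξ : Fin p → ℝ) :
    Matrix (Fin m) (Fin n) ℝ :=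
  Matrix.of fun i j => ∑ k, ξ k * A (Matrix.single i j 1) k

/-- The subspace `S_d` of `d × d` real symmetric matrices. -/
def SymSpace (d : ℕ) : Submodule ℝ (Matrix (Fin d) (Fin d) ℝ) where
  carrier := {A | Aᵀ = A}
  add_mem' := by intro a b ha hb; simp only [Set.mem_setOf_eq, Matrix.transpose_add] at *
                 rw [ha, hb]
  zero_mem' := by simp
  smul_mem' := by intro c A hA; simp only [Set.mem_setOf_eq, Matrix.transpose_smul] at *
                  rw [hA]

lemma mem_symSpace {d : ℕ} {A : Matrix (Fin d) (Fin d) ℝ} : A ∈ SymSpace d ↔ Aᵀ = A := Iff.rfl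

lemma stdBasis_symm {d : ℕ} (i j : Fin d) :
    Matrix.single i j (1:ℝ) + Matrix.single j i 1 ∈ SymSpace d := by
  rw [mem_symSpace, Matrix.transpose_add]
  ext a b
  simp only [Matrix.add_apply, Matrix.transpose_apply, Matrix.single, Matrix.of_apply]
  rw [add_comm]
  congr 1 <;> · congr 1; rw [eq_iff_iff, and_comm]

/-- The symmetrized elementary matrix `E_ij + E_ji` as an element of `S_d`. -/
def symBasis {d : ℕ} (i j : Fin d) : SymSpace d :=
  ⟨Matrix.single i j 1 + Matrix.single j i 1, stdBasis_symm i j⟩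

lemma mmT_mem {d r : ℕ} (U : Matrix (Fin d) (Fin r) ℝ) : U * Uᵀ ∈ SymSpace d := by
  rw [mem_symSpace, Matrix.transpose_mul, Matrix.transpose_transpose]

/-- `U ↦ UUᵀ` as an element of `S_d`. -/
def mmT {d r : ℕ} (U : Matrix (Fin d) (Fin r) ℝ) : SymSpace d := ⟨U * Uᵀ, mmT_mem U⟩

/-- The gradient of `φ : S_d → ℝ` at `M`, as the symmetric matrix representing the
derivative w.r.t. the trace inner product on `S_d`. -/
def gradS {d : ℕ} (φ : SymSpace d → ℝ) (M : SymSpace d) : Matrix (Fin d) (Fin d) ℝ :=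
  Matrix.of fun i j => (1/2) * fderiv ℝ φ M (symBasis i j)

/-- Hessian quadratic form of `φ : S_d → ℝ`. -/
def hessS {d : ℕ} (φ : SymSpace d → ℝ) (M E : SymSpace d) : ℝ :=
  fderiv ℝ (fun N => fderiv ℝ φ N E) M E

/-- Adjoint of a linear map `𝒜 : S_d → ℝⁿ` w.r.t. the trace inner product on `S_d`. -/
def adjS {d p : ℕ} (A : SymSpace d →ₗ[ℝ] (Fin p → ℝ)) (ξ : Fin p → ℝ) :
    Matrix (Fin d) (Fin d) ℝ :=
  Matrix.of fun i j => (1/2) * ∑ k, ξ k * A (symBasis i j) k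

/-- `P` is the orthogonal projection matrix onto the column space of `U`:
it is symmetric, idempotent, and has the same range as `U`. -/
def IsOrthProjCol {d r : ℕ} (P : Matrix (Fin d) (Fin d) ℝ) (U : Matrix (Fin d) (Fin r) ℝ) :
    Prop :=
  Pᵀ = P ∧ P * P = P ∧ P * U = U ∧ ∃ W : Matrix (Fin r) (Fin d) ℝ, P = U * W

/-! All singular values of `M̃` are `0` or `1`, so `M̃ᴴM̃` is idempotent. Hence `‖M̃‖_F² = r`,
`‖cM̃‖_* = c r` for `c ≥ 0`, and `⟨M̃, M⟩ ≤ ‖M‖_*` for every `M`: in an orthonormal eigenbasis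
`(vⱼ)` of `MᴴM` the pairing is `∑ⱼ ⟨M̃vⱼ, Mvⱼ⟩` with `‖M̃vⱼ‖ ≤ 1` and `‖Mvⱼ‖ = σⱼ(M)`.
Expanding the squares, this duality gives `f(M) ≥ f(M̂) + ½‖M - M̂‖_F²` for the objective `f`,
which is minimality and uniqueness at once. The error identity is Pythagoras, as
`⟨M̃, M*⟩ = tr(M̃ᵀM*) = 0`. -/

namespace Matrix.IsHermitian

variable {n : Type*} [Fintype n] [DecidableEq n] {H : Matrix n n ℝ} (hH : H.IsHermitian)

lemma eigenvalues_eq_zero_or_eq_of_mul_self_eq_smul {a : ℝ} (h : H * H = a • H) (i : n) :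
    hH.eigenvalues i = 0 ∨ hH.eigenvalues i = a := by
  set v : n → ℝ := ⇑(hH.eigenvectorBasis i)
  have hv : v ≠ 0 := fun h0 =>
    hH.eigenvectorBasis.orthonormal.ne_zero i (by ext j; exact congrFun h0 j)
  have hHv := hH.mulVec_eigenvectorBasis i
  have key : (hH.eigenvalues i * hH.eigenvalues i) • v = (a * hH.eigenvalues i) • v := by
    rw [mul_smul, mul_smul, ← hHv, ← mulVec_smul, ← hHv, mulVec_mulVec, h, smul_mulVec]
  rcases mul_eq_mul_right_iff.mp (smul_left_injective ℝ hv key) with h' | h'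
  · exact Or.inr h'
  · exact Or.inl h'

lemma sum_apply_eigenvalues_of_mul_self_eq_smul {a : ℝ} (h : H * H = a • H) (f : ℝ → ℝ)
    (hf : f 0 = 0) : ∑ i, f (hH.eigenvalues i) = f a * H.rank := by
  classical
  have hfi : ∀ i, f (hH.eigenvalues i) = if hH.eigenvalues i ≠ 0 then f a else 0 := fun i => by
    by_cases h0 : hH.eigenvalues i = 0
    · simp [h0, hf]
    · rw [if_pos h0, (hH.eigenvalues_eq_zero_or_eq_of_mul_self_eq_smul h i).resolve_left h0]
  rw [Finset.sum_congr rfl fun i _ => hfi i, Finset.sum_ite, Finset.sum_const_zero, add_zero,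
    Finset.sum_const, nsmul_eq_mul, hH.rank_eq_card_non_zero_eigs, Fintype.card_subtype, mul_comm]

lemma isIdempotentElem_of_eigenvalues_eq_zero_or_one
    (h01 : ∀ i, hH.eigenvalues i = 0 ∨ hH.eigenvalues i = 1) : IsIdempotentElem H := by
  have hD : diagonal (RCLike.ofReal ∘ hH.eigenvalues) * diagonal (RCLike.ofReal ∘ hH.eigenvalues)
      = diagonal (RCLike.ofReal ∘ hH.eigenvalues : n → ℝ) := by
    rw [diagonal_mul_diagonal]
    congr 1
    funext i
    rcases h01 i with h | h <;> simp [h]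
  rw [IsIdempotentElem, hH.spectral_theorem, ← map_mul, hD]

end Matrix.IsHermitian

lemma List.eq_zero_or_eq_one_of_leading_ones_of_countP {α : Type*} [Zero α] [One α] [NeZero (1 : α)]
    [DecidableEq α] {l : List α} {k : ℕ} (hcount : l.countP (· ≠ 0) = k)
    (hones : ∀ i < k, l.getD i 0 = 1) {x : α} (hx : x ∈ l) : x = 0 ∨ x = 1 := by
  have hk : k ≤ l.length := hcount ▸ l.countP_le_length
  have htake : ∀ y ∈ l.take k, y = 1 := by
    intro y hy
    obtain ⟨i, hi, rfl⟩ := List.mem_iff_getElem.mp hy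
    rw [List.length_take] at hi
    rw [List.getElem_take, ← List.getD_eq_getElem l 0]
    exact hones i (by omega)
  have hcount_take : (l.take k).countP (· ≠ 0) = k := by
    rw [List.countP_eq_length.mpr fun y hy => by simp [htake y hy], List.length_take,
      min_eq_left hk]
  have hdrop : ∀ y ∈ l.drop k, y = 0 := by
    have h0 : (l.drop k).countP (· ≠ 0) = 0 := by
      have := List.countP_append (l₁ := l.take k) (l₂ := l.drop k) (p := (· ≠ 0))
      rw [List.take_append_drop, hcount, hcount_take] at this
      omega
    simpa using List.countP_eq_zero.mp h0
  rw [← List.take_append_drop k l, List.mem_append] at hx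
  rcases hx with hx | hx
  · exact Or.inr (htake x hx)
  · exact Or.inl (hdrop x hx)

/-- The sorting plays no role: the first `rank H` entries are `1`, and exactly `rank H` entries
are nonzero, so all the others vanish. -/
lemma Matrix.IsHermitian.eigenvalues_eq_zero_or_one_of_sorted_sqrt {n : ℕ}
    {H : Matrix (Fin n) (Fin n) ℝ} (hH : H.IsHermitian) (hnn : ∀ i, 0 ≤ hH.eigenvalues i)
    (hs : ∀ i < H.rank,
      (((List.ofFn hH.eigenvalues).map Real.sqrt).insertionSort (· ≥ ·)).getD i 0 = 1)
    (i : Fin n) : hH.eigenvalues i = 0 ∨ hH.eigenvalues i = 1 := by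
  set l := ((List.ofFn hH.eigenvalues).map Real.sqrt).insertionSort (· ≥ ·)
  have hperm : l.Perm ((List.ofFn hH.eigenvalues).map Real.sqrt) := List.perm_insertionSort _ _
  have hcount : l.countP (· ≠ 0) = H.rank := by
    rw [hperm.countP_eq, List.countP_map, hH.rank_eq_card_non_zero_eigs, Fintype.card_subtype,
      List.countP_congr (q := (· ≠ 0)) fun x hx => ?_, ← Multiset.coe_countP, ← Fin.univ_val_map,
      Multiset.countP_map]
    · rfl
    · obtain ⟨j, rfl⟩ := List.mem_ofFn.mp hx
      simp [Real.sqrt_eq_zero (hnn j)]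
  have hmem : √(hH.eigenvalues i) ∈ l :=
    hperm.mem_iff.mpr (List.mem_map_of_mem (List.mem_ofFn.mpr ⟨i, rfl⟩))
  rcases List.eq_zero_or_eq_one_of_leading_ones_of_countP hcount hs hmem with h | h
  · exact Or.inl ((Real.sqrt_eq_zero (hnn i)).mp h)
  · exact Or.inr ((Real.sqrt_eq_one).mp h)

lemma isIdempotentElem_conjTranspose_mul_self_of_singVal {m n k : ℕ}
    {A : Matrix (Fin m) (Fin n) ℝ} (hrk : A.rank = k)
    (hs : ∀ j : ℕ, 1 ≤ j → j ≤ k → singVal A j = 1) : IsIdempotentElem (Aᴴ * A) := by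
  have hAT : Aᴴ = Aᵀ := conjTranspose_eq_transpose_of_trivial A
  have hpsd : (Aᵀ * A).PosSemidef := hAT ▸ posSemidef_conjTranspose_mul_self A
  rw [hAT]
  refine hpsd.1.isIdempotentElem_of_eigenvalues_eq_zero_or_one
    (hpsd.1.eigenvalues_eq_zero_or_one_of_sorted_sqrt hpsd.eigenvalues_nonneg fun i hi => ?_)
  rw [rank_transpose_mul_self, hrk] at hi
  exact hs (i + 1) (Nat.le_add_left 1 i) hi

section TraceInner

variable {m n : ℕ}

lemma tip_self_nonneg (A : Matrix (Fin m) (Fin n) ℝ) : 0 ≤ tip A A :=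
  Finset.sum_nonneg fun _ _ => Finset.sum_nonneg fun _ _ => mul_self_nonneg _

lemma frob_eq_sqrt_tip (A : Matrix (Fin m) (Fin n) ℝ) : frob A = √(tip A A) := by
  simp only [frob, tip, sq]

lemma frob_sq (A : Matrix (Fin m) (Fin n) ℝ) : frob A ^ 2 = tip A A := by
  rw [frob_eq_sqrt_tip, Real.sq_sqrt (tip_self_nonneg A)]

lemma tip_comm (A B : Matrix (Fin m) (Fin n) ℝ) : tip A B = tip B A := by
  simp only [tip, mul_comm]

lemma tip_sub_left (A B C : Matrix (Fin m) (Fin n) ℝ) : tip (A - B) C = tip A C - tip B C := by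
  simp only [tip, Matrix.sub_apply, sub_mul, Finset.sum_sub_distrib]

lemma tip_sub_right (A B C : Matrix (Fin m) (Fin n) ℝ) : tip A (B - C) = tip A B - tip A C := by
  rw [tip_comm, tip_sub_left, tip_comm B, tip_comm C]

lemma tip_smul_left (c : ℝ) (A B : Matrix (Fin m) (Fin n) ℝ) : tip (c • A) B = c * tip A B := by
  simp only [tip, Matrix.smul_apply, smul_eq_mul, Finset.mul_sum, mul_assoc]

lemma tip_smul_right (c : ℝ) (A B : Matrix (Fin m) (Fin n) ℝ) : tip A (c • B) = c * tip A B := by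
  rw [tip_comm, tip_smul_left, tip_comm]

lemma tip_eq_trace_conjTranspose_mul (A B : Matrix (Fin m) (Fin n) ℝ) :
    tip A B = (Aᴴ * B).trace := by
  simp only [tip, trace, diag, mul_apply, conjTranspose_apply, star_trivial]
  exact Finset.sum_comm

lemma tip_eq_zero_of_transpose_mul_eq_zero {A B : Matrix (Fin m) (Fin n) ℝ} (h : Aᵀ * B = 0) :
    tip A B = 0 := by
  rw [tip_eq_trace_conjTranspose_mul, conjTranspose_eq_transpose_of_trivial, h, trace_zero]

lemma tip_self_smul_sub_of_tip_eq_zero {A B : Matrix (Fin m) (Fin n) ℝ} (h : tip A B = 0)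
    (c : ℝ) : tip (c • A - B) (c • A - B) = tip B B + c ^ 2 * tip A A := by
  simp only [tip_sub_left, tip_sub_right, tip_smul_left, tip_smul_right, tip_comm B A, h]
  ring

lemma eq_zero_of_frob_sq_nonpos {A : Matrix (Fin m) (Fin n) ℝ} (h : frob A ^ 2 ≤ 0) : A = 0 := by
  rw [frob_sq, tip] at h
  have hrow := (Finset.sum_eq_zero_iff_of_nonneg fun i _ =>
    Finset.sum_nonneg fun j _ => mul_self_nonneg (A i j)).mp (le_antisymm h (tip_self_nonneg A))
  ext i j
  exact mul_self_eq_zero.mp ((Finset.sum_eq_zero_iff_of_nonneg fun j _ =>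
    mul_self_nonneg (A i j)).mp (hrow i (Finset.mem_univ i)) j (Finset.mem_univ j))

end TraceInner

section NuclearNorm

variable {m n : ℕ}

lemma nucNorm_eq_sum_sqrt_eigenvalues (A : Matrix (Fin m) (Fin n) ℝ) :
    nucNorm A = ∑ i, √((isHermitian_conjTranspose_mul_self A).eigenvalues i) := by
  rw [nucNorm, trace_mul_cycle, Unitary.coe_star_mul_self, one_mul, trace_diagonal]
  rfl

lemma nucNorm_eq_sqrt_mul_rank {A : Matrix (Fin m) (Fin n) ℝ} {a : ℝ}
    (h : (Aᴴ * A) * (Aᴴ * A) = a • (Aᴴ * A)) : nucNorm A = √a * A.rank := by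
  rw [nucNorm_eq_sum_sqrt_eigenvalues, IsHermitian.sum_apply_eigenvalues_of_mul_self_eq_smul _ h
    _ Real.sqrt_zero, rank_conjTranspose_mul_self]

lemma tip_self_eq_mul_rank {A : Matrix (Fin m) (Fin n) ℝ} {a : ℝ}
    (h : (Aᴴ * A) * (Aᴴ * A) = a • (Aᴴ * A)) : tip A A = a * A.rank := by
  have hH := isHermitian_conjTranspose_mul_self A
  rw [tip_eq_trace_conjTranspose_mul, hH.trace_eq_sum_eigenvalues, ← rank_conjTranspose_mul_self]
  simpa using hH.sum_apply_eigenvalues_of_mul_self_eq_smul h id rfl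

lemma tip_self_eq_rank {A : Matrix (Fin m) (Fin n) ℝ} (hA : IsIdempotentElem (Aᴴ * A)) :
    tip A A = A.rank := by
  rw [tip_self_eq_mul_rank (a := 1) (by rw [one_smul]; exact hA), one_mul]

lemma nucNorm_smul_eq_mul_rank {A : Matrix (Fin m) (Fin n) ℝ} (hA : IsIdempotentElem (Aᴴ * A))
    {c : ℝ} (hc : 0 ≤ c) : nucNorm (c • A) = c * A.rank := by
  have hcA : (c • A)ᴴ * (c • A) = (c * c) • (Aᴴ * A) := by
    rw [conjTranspose_smul, star_trivial, Matrix.smul_mul, Matrix.mul_smul, smul_smul]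
  have hsq : ((c • A)ᴴ * (c • A)) * ((c • A)ᴴ * (c • A)) = (c * c) • ((c • A)ᴴ * (c • A)) := by
    rw [hcA, Matrix.smul_mul, Matrix.mul_smul, hA.eq]
  rw [nucNorm_eq_sqrt_mul_rank hsq, Real.sqrt_mul_self hc]
  rcases hc.eq_or_lt with rfl | hpos
  · simp
  · rw [rank_smul_of_mem_nonZeroDivisors A (mem_nonZeroDivisors_of_ne_zero hpos.ne')]

lemma nucNorm_nonneg (M : Matrix (Fin m) (Fin n) ℝ) : 0 ≤ nucNorm M := by
  rw [nucNorm_eq_sum_sqrt_eigenvalues]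
  exact Finset.sum_nonneg fun _ _ => Real.sqrt_nonneg _

end NuclearNorm

lemma Matrix.sum_sq_apply_le_one_of_isIdempotentElem {ι κ : Type*} [Fintype ι] [Fintype κ]
    {X : Matrix ι κ ℝ} (hX : IsIdempotentElem (Xᴴ * X)) (j : κ) : ∑ i, X i j ^ 2 ≤ 1 := by
  set Q := Xᴴ * X
  have hQjj : Q j j = ∑ i, X i j ^ 2 := by
    simp only [Q, mul_apply, conjTranspose_apply, star_trivial, sq]
  have hsymm : ∀ k, Q j k = Q k j := fun k =>
    ((isHermitian_conjTranspose_mul_self X).apply j k).symm.trans (star_trivial _)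
  have hsq : Q j j ^ 2 ≤ Q j j :=
    calc Q j j ^ 2 ≤ ∑ k, Q k j ^ 2 :=
          Finset.single_le_sum (fun k _ => sq_nonneg (Q k j)) (Finset.mem_univ j)
      _ = (Q * Q) j j := by rw [mul_apply]; exact Finset.sum_congr rfl fun k _ => by rw [sq, hsymm]
      _ = Q j j := by rw [hX.eq]
  nlinarith [hQjj ▸ Finset.sum_nonneg fun i _ => sq_nonneg (X i j)]

lemma tip_le_nucNorm {m n : ℕ} {A : Matrix (Fin m) (Fin n) ℝ} (hA : IsIdempotentElem (Aᴴ * A))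
    (M : Matrix (Fin m) (Fin n) ℝ) : tip A M ≤ nucNorm M := by
  set hM := isHermitian_conjTranspose_mul_self M
  have hdiag := hM.conjStarAlgAut_star_eigenvectorUnitary
  rw [Unitary.conjStarAlgAut_star_apply] at hdiag
  set U : Matrix (Fin n) (Fin n) ℝ := (hM.eigenvectorUnitary : Matrix (Fin n) (Fin n) ℝ)
  have hUU : U * star U = 1 := mem_unitaryGroup_iff.mp hM.eigenvectorUnitary.2
  have hconj : ∀ B C : Matrix (Fin m) (Fin n) ℝ, (B * U)ᴴ * (C * U) = star U * (Bᴴ * C) * U :=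
    fun B C => by rw [conjTranspose_mul, ← star_eq_conjTranspose]; simp only [Matrix.mul_assoc]
  have hrot : tip A M = tip (A * U) (M * U) := by
    rw [tip_eq_trace_conjTranspose_mul, tip_eq_trace_conjTranspose_mul, hconj, trace_mul_cycle,
      hUU, one_mul]
  have hcolM : ∀ j, ∑ i, (M * U) i j ^ 2 = hM.eigenvalues j := fun j => by
    have := congrFun (congrFun (hconj M M) j) j
    rw [hdiag, mul_apply, diagonal_apply_eq] at this
    simpa only [conjTranspose_apply, star_trivial, sq, Function.comp_apply,
      RCLike.ofReal_real_eq_id, id] using this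
  have hidem : IsIdempotentElem ((A * U)ᴴ * (A * U)) := by
    rw [hconj, IsIdempotentElem]
    calc star U * (Aᴴ * A) * U * (star U * (Aᴴ * A) * U)
        = star U * ((Aᴴ * A) * (U * star U) * (Aᴴ * A)) * U := by simp only [Matrix.mul_assoc]
      _ = star U * (Aᴴ * A) * U := by rw [hUU, Matrix.mul_one, hA.eq]
  rw [hrot, tip, Finset.sum_comm, nucNorm_eq_sum_sqrt_eigenvalues]
  gcongr with j
  calc ∑ i, (A * U) i j * (M * U) i j
      ≤ √(∑ i, (A * U) i j ^ 2) * √(∑ i, (M * U) i j ^ 2) := Real.sum_mul_le_sqrt_mul_sqrt _ _ _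
    _ ≤ 1 * √(hM.eigenvalues j) := by
        rw [hcolM]
        gcongr
        exact Real.sqrt_le_one.mpr (sum_sq_apply_le_one_of_isIdempotentElem hidem j)
    _ = √(hM.eigenvalues j) := one_mul _

section SoftThresholding

variable {m n : ℕ}

def nucNormProxObjective (lam : ℝ) (A M : Matrix (Fin m) (Fin n) ℝ) : ℝ :=
  1 / 2 * frob (M - A) ^ 2 + lam * nucNorm M

theorem nucNormProxObjective_softThreshold_add_le {A : Matrix (Fin m) (Fin n) ℝ}
    (hA : IsIdempotentElem (Aᴴ * A)) {lam : ℝ} (hlam : 0 ≤ lam) (M : Matrix (Fin m) (Fin n) ℝ) :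
    nucNormProxObjective lam A (max (1 - lam) 0 • A)
        + 1 / 2 * frob (M - max (1 - lam) 0 • A) ^ 2 ≤ nucNormProxObjective lam A M := by
  set c := max (1 - lam) 0
  have hAA := tip_self_eq_rank hA
  have hnuc : nucNorm (c • A) = c * A.rank := nucNorm_smul_eq_mul_rank hA (le_max_right _ _)
  have hdual := tip_le_nucNorm hA M
  have hnn := nucNorm_nonneg M
  simp only [nucNormProxObjective, frob_sq, hnuc,
    tip_sub_left, tip_sub_right, tip_smul_left, tip_smul_right, tip_comm M A, hAA]
  rcases le_total lam 1 with h1 | h1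
  · have hc : c = 1 - lam := max_eq_left (by linarith)
    rw [hc]
    nlinarith [mul_le_mul_of_nonneg_left hdual hlam]
  · have hc : c = 0 := max_eq_right (by linarith)
    rw [hc]
    nlinarith [mul_le_mul_of_nonneg_right h1 hnn]

end SoftThresholding

lemma inv_sqrt_two_mul_le_sqrt {r s lam : ℝ} (hr : 0 ≤ r) (hs : 0 ≤ s) (h0 : 0 ≤ lam)
    (h1 : lam ≤ 1) :
    1 / √2 * (√s * lam + √(r + s) * (1 - lam)) ≤ √(s + (1 - lam) ^ 2 * r) := by
  have ha := Real.sq_sqrt hs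
  have hb := Real.sq_sqrt (add_nonneg hr hs)
  rw [one_div_mul_eq_div, div_le_iff₀ (by positivity), ← Real.sqrt_mul (by positivity)]
  apply Real.le_sqrt_of_sq_le
  nlinarith [sq_nonneg (√s * lam - √(r + s) * (1 - lam)),
    mul_nonneg (mul_nonneg h0 (sub_nonneg.mpr h1)) hs]

theorem soft_thresholding_example_general
    (r rs d₁ d₂ : ℕ)
    (Mtl Mst : Matrix (Fin d₁) (Fin d₂) ℝ)
    (hrk1 : Mtl.rank = r) (hrk2 : Mst.rank = rs)
    (horth2 : Mtlᵀ * Mst = 0)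
    (hs1 : ∀ j : ℕ, 1 ≤ j → j ≤ r → singVal Mtl j = 1)
    (hs2 : ∀ j : ℕ, 1 ≤ j → j ≤ rs → singVal Mst j = 1) :
    ∀ lam : ℝ, 0 ≤ lam →
      ((∀ M : Matrix (Fin d₁) (Fin d₂) ℝ,
          (1/2) * frob (max (1 - lam) 0 • Mtl - Mtl) ^ 2
              + lam * nucNorm (max (1 - lam) 0 • Mtl)
            ≤ (1/2) * frob (M - Mtl) ^ 2 + lam * nucNorm M) ∧
        (∀ M : Matrix (Fin d₁) (Fin d₂) ℝ,
          (1/2) * frob (M - Mtl) ^ 2 + lam * nucNorm M ≤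
            (1/2) * frob (max (1 - lam) 0 • Mtl - Mtl) ^ 2
              + lam * nucNorm (max (1 - lam) 0 • Mtl)
          → M = max (1 - lam) 0 • Mtl)) ∧
      (lam ≤ 1 →
        frob (max (1 - lam) 0 • Mtl - Mst) = Real.sqrt ((rs : ℝ) + (1 - lam)^2 * r) ∧
        (1 / Real.sqrt 2) * (Real.sqrt rs * lam + Real.sqrt ((r:ℝ) + rs) * (1 - lam)) ≤
          frob (max (1 - lam) 0 • Mtl - Mst)) := by
  intro lam hlam
  have hMtl := isIdempotentElem_conjTranspose_mul_self_of_singVal hrk1 hs1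
  have hMst := isIdempotentElem_conjTranspose_mul_self_of_singVal hrk2 hs2
  have hopt := nucNormProxObjective_softThreshold_add_le hMtl hlam
  unfold nucNormProxObjective at hopt
  refine ⟨⟨fun M => ?_, fun M hM => ?_⟩, fun hlam1 => ?_⟩
  · linarith [hopt M, sq_nonneg (frob (M - max (1 - lam) 0 • Mtl))]
  · exact sub_eq_zero.mp (eq_zero_of_frob_sq_nonpos (by linarith [hopt M]))
  · have herr : frob (max (1 - lam) 0 • Mtl - Mst) = √((rs : ℝ) + (1 - lam) ^ 2 * r) := by
      rw [frob_eq_sqrt_tip, tip_self_smul_sub_of_tip_eq_zero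
        (tip_eq_zero_of_transpose_mul_eq_zero horth2), tip_self_eq_rank hMtl,
        tip_self_eq_rank hMst, hrk1, hrk2, max_eq_left (by linarith)]
    exact ⟨herr, herr ▸ inv_sqrt_two_mul_le_sqrt (Nat.cast_nonneg r) (Nat.cast_nonneg rs)
      hlam hlam1⟩

/-- soft-thresholding example: sharpness of the error bound. -/
theorem soft_thresholding_example
    (r rs d₁ d₂ : ℕ) (hrs : 1 ≤ rs) (hr : rs ≤ r)
    (hd₁ : r + rs ≤ d₁) (hd₂ : r + rs ≤ d₂)
    (Mtl Mst : Matrix (Fin d₁) (Fin d₂) ℝ)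
    (hrk1 : Mtl.rank = r) (hrk2 : Mst.rank = rs)
    (horth1 : Mtl * Mstᵀ = 0) (horth2 : Mtlᵀ * Mst = 0)
    (hs1 : ∀ j : ℕ, 1 ≤ j → j ≤ r → singVal Mtl j = 1)
    (hs2 : ∀ j : ℕ, 1 ≤ j → j ≤ rs → singVal Mst j = 1) :
    ∀ lam : ℝ, 0 ≤ lam →
      ((∀ M : Matrix (Fin d₁) (Fin d₂) ℝ,
          (1/2) * frob (max (1 - lam) 0 • Mtl - Mtl) ^ 2
              + lam * nucNorm (max (1 - lam) 0 • Mtl)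
            ≤ (1/2) * frob (M - Mtl) ^ 2 + lam * nucNorm M) ∧
        (∀ M : Matrix (Fin d₁) (Fin d₂) ℝ,
          (1/2) * frob (M - Mtl) ^ 2 + lam * nucNorm M ≤
            (1/2) * frob (max (1 - lam) 0 • Mtl - Mtl) ^ 2
              + lam * nucNorm (max (1 - lam) 0 • Mtl)
          → M = max (1 - lam) 0 • Mtl)) ∧
      (lam ≤ 1 →
        frob (max (1 - lam) 0 • Mtl - Mst) = Real.sqrt ((rs : ℝ) + (1 - lam)^2 * r) ∧
        (1 / Real.sqrt 2) * (Real.sqrt rs * lam + Real.sqrt ((r:ℝ) + rs) * (1 - lam)) ≤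
          frob (max (1 - lam) 0 • Mtl - Mst)) :=
  soft_thresholding_example_general r rs d₁ d₂ Mtl Mst hrk1 hrk2 horth2 hs1 hs2

end
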